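/- Let (Fₙ) be an orthonormal basis in B(H,H₀), i.e. Fₙ Fₖ* = δ_{n,k} I_{H₀} for all n, k ∈ ℕ and Σ_{n=1}^∞ ‖Fₙ h‖² = ‖h‖² for all h ∈ H. Then a pair of sequences ((Aₙ),(Ψₙ)) of bounded linear operators from H to H₀ is a factorable weak operator-valued frame in B(H,H₀) if and only if there exist bounded linear operators U, V : H → H such that Aₙ = Fₙ U and Ψₙ = Fₙ V for all n ∈ ℕ, and V*U is bounded invertible on H. -/

import Mathlib

/-!
The completeness condition `∑ ‖Fₙ h‖² = ‖h‖²` makes the analysis operator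
`Θ : h ↦ (Fₙ h)ₙ` an isometry into `ℓ²(ℕ, H₀)`, so `Θ* Θ = 1`, and since `Fₙ* = Θ* Lₙ` this is the
reconstruction formula `∑ Fₙ* Fₙ = 1` (strongly). Orthonormality gives `Θ Fₙ* = Lₙ`, i.e.
`Fₙ Θ* = Lₙ*`. Hence if `θ_A h = ∑ Lₙ Aₙ h`, reading off the `n`-th coordinate gives
`Aₙ = Lₙ* θ_A = Fₙ (Θ* θ_A)`, so `U = Θ* θ_A`, `V = Θ* θ_Ψ` and the frame operator is
`∑ Ψₙ* Aₙ = V* (∑ Fₙ* Fₙ) U = V* U`. Conversely `θ_A = Θ U` and `θ_Ψ = Θ V`.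
-/

noncomputable section

open ContinuousLinearMap Filter

variable {H H₀ : Type*} [NormedAddCommGroup H] [InnerProductSpace ℂ H] [CompleteSpace H]
  [NormedAddCommGroup H₀] [InnerProductSpace ℂ H₀] [CompleteSpace H₀]

/-- `ℓ²(I, H₀)`: square-summable `H₀`-valued families indexed by `I`. -/
abbrev l2 (I : Type*) (H₀ : Type*) [NormedAddCommGroup H₀] : Type _ :=
  lp (fun _ : I => H₀) 2

/-- The isometry `Lᵢ : H₀ → ℓ²(I,H₀)` sending `h` to the family equal to `h` at index `i`
and `0` elsewhere. -/
def Lop {I : Type*} [DecidableEq I] (i : I) : H₀ →L[ℂ] l2 I H₀ :=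
  LinearMap.mkContinuous
    { toFun := fun h => lp.single 2 i h
      map_add' := by
        intro a b
        apply lp.ext
        funext j
        by_cases hj : j = i
        · subst hj; simp [lp.single_apply_self]
        · simp [lp.single_apply_ne _ _ _ hj, lp.coeFn_add]
      map_smul' := by
        intro c a
        simp [lp.single_smul] }
    1
    (by
      intro h
      simpa using (lp.norm_single (p := 2) (by norm_num) (fun _ : I => h) i).le)

/-- Convergence of the sequence of partial sums `∑_{n < m} f n` to `x` as `m → ∞`. -/
def SeqSum {E : Type*} [AddCommMonoid E] [TopologicalSpace E] (f : ℕ → E) (x : E) : Prop :=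
  Tendsto (fun m => ∑ n ∈ Finset.range m, f n) atTop (nhds x)

lemma hasSum_norm_sq_l2 {I E : Type*} [NormedAddCommGroup E] (f : l2 I E) :
    HasSum (fun i => ‖f i‖ ^ 2) (‖f‖ ^ 2) := by
  simpa [Real.rpow_two] using lp.hasSum_norm (p := 2) (by norm_num) f

@[simp]
lemma Lop_apply {I E : Type*} [DecidableEq I] [NormedAddCommGroup E] [InnerProductSpace ℂ E]
    (i : I) (y : E) : Lop i y = lp.single 2 i y := rfl

lemma adjoint_Lop_apply {I : Type*} [DecidableEq I] (i : I) (f : l2 I H₀) :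
    adjoint (Lop i : H₀ →L[ℂ] l2 I H₀) f = f i :=
  ext_inner_right ℂ fun y => by
    rw [adjoint_inner_left]
    exact lp.inner_single_right (𝕜 := ℂ) (G := fun _ : I => H₀) i y f

lemma SeqSum.map {R E G : Type*} [Semiring R] [AddCommMonoid E] [TopologicalSpace E] [Module R E]
    [AddCommMonoid G] [TopologicalSpace G] [Module R G] {f : ℕ → E} {x : E} (hf : SeqSum f x)
    (T : E →L[R] G) : SeqSum (fun n => T (f n)) (T x) := by
  unfold SeqSum at *
  simpa only [map_sum, Function.comp_def] using (T.continuous.tendsto x).comp hf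

lemma seqSum_Lop {E : Type*} [NormedAddCommGroup E] [InnerProductSpace ℂ E] (y : l2 ℕ E) :
    SeqSum (fun n => Lop n (y n)) y :=
  (lp.hasSum_single (by norm_num) y).tendsto_sum_nat

lemma SeqSum.apply_eq_of_Lop {b : ℕ → H₀} {y : l2 ℕ H₀} (h : SeqSum (fun k => Lop k (b k)) y)
    (n : ℕ) : y n = b n := by
  have hlim := h.map (adjoint (Lop n))
  rw [adjoint_Lop_apply] at hlim
  refine tendsto_nhds_unique hlim (tendsto_const_nhds.congr' ?_)
  filter_upwards [eventually_gt_atTop n] with m hm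
  simp [adjoint_Lop_apply, lp.single_apply, Pi.single_apply, hm]

section Parseval

variable {I E E₀ : Type*} [NormedAddCommGroup E] [NormedSpace ℂ E]
  [NormedAddCommGroup E₀] [NormedSpace ℂ E₀]

def IsParsevalFamily (F : I → E →L[ℂ] E₀) : Prop :=
  ∀ h : E, HasSum (fun i => ‖F i h‖ ^ 2) (‖h‖ ^ 2)

variable {F : I → E →L[ℂ] E₀}

lemma IsParsevalFamily.memℓp (hF : IsParsevalFamily F) (h : E) : Memℓp (fun i => F i h) 2 :=
  memℓp_gen <| by simpa [Real.rpow_two] using (hF h).summable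

lemma IsParsevalFamily.norm_mk (hF : IsParsevalFamily F) (h : E) :
    ‖(⟨fun i => F i h, hF.memℓp h⟩ : l2 I E₀)‖ = ‖h‖ :=
  (sq_eq_sq₀ (norm_nonneg _) (norm_nonneg h)).mp <| (hasSum_norm_sq_l2 _).unique (hF h)

variable (F) in
def parsevalAnalysis (hF : IsParsevalFamily F) : E →L[ℂ] l2 I E₀ :=
  LinearIsometry.toContinuousLinearMap
    { toFun := fun h => ⟨fun i => F i h, hF.memℓp h⟩
      map_add' := fun a b => lp.ext <| funext fun i => map_add (F i) a b
      map_smul' := fun c a => lp.ext <| funext fun i => map_smul (F i) c a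
      norm_map' := hF.norm_mk }

@[simp]
lemma parsevalAnalysis_apply_apply (hF : IsParsevalFamily F) (h : E) (i : I) :
    parsevalAnalysis F hF h i = F i h := rfl

end Parseval

lemma IsParsevalFamily.seqSum_Lop_of_eq_comp {E E₀ K : Type*} [NormedAddCommGroup E]
    [NormedSpace ℂ E] [NormedAddCommGroup E₀] [InnerProductSpace ℂ E₀] [NormedAddCommGroup K]
    [NormedSpace ℂ K] {F : ℕ → E →L[ℂ] E₀} (hF : IsParsevalFamily F) {B : ℕ → K →L[ℂ] E₀}
    {W : K →L[ℂ] E} (hB : ∀ n, B n = F n ∘L W) (h : K) :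
    SeqSum (fun n => Lop n (B n h)) ((parsevalAnalysis F hF ∘L W) h) := by
  have hterm : (fun n => Lop n (B n h)) = fun n => Lop n (parsevalAnalysis F hF (W h) n) :=
    funext fun n => by rw [hB]; rfl
  rw [hterm]
  exact seqSum_Lop _

section ParsevalAdjoint

variable {I : Type*} {F : I → H →L[ℂ] H₀}

lemma adjoint_parsevalAnalysis_comp_self (hF : IsParsevalFamily F) :
    adjoint (parsevalAnalysis F hF) ∘L parsevalAnalysis F hF = 1 :=
  (norm_map_iff_adjoint_comp_self _).mp hF.norm_mk

variable [DecidableEq I]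

lemma adjoint_parsevalAnalysis_comp_Lop (hF : IsParsevalFamily F) (i : I) :
    adjoint (parsevalAnalysis F hF) ∘L Lop i = adjoint (F i) := by
  have h : adjoint (Lop i) ∘L parsevalAnalysis F hF = F i := ext fun x => adjoint_Lop_apply i _
  rw [← h, adjoint_comp, adjoint_adjoint]

lemma comp_adjoint_parsevalAnalysis (hF : IsParsevalFamily F)
    (hFortho : ∀ i j, F i ∘L adjoint (F j) = if i = j then 1 else 0) (i : I) :
    F i ∘L adjoint (parsevalAnalysis F hF) = adjoint (Lop i) := by
  have h : parsevalAnalysis F hF ∘L adjoint (F i) = Lop i := by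
    ext y : 1
    refine lp.ext <| funext fun j => ?_
    change (F j ∘L adjoint (F i)) y = Lop i y j
    rw [hFortho j i, Lop_apply, lp.single_apply, Pi.single_apply]
    split_ifs <;> rfl
  rw [← h, adjoint_comp, adjoint_adjoint]

end ParsevalAdjoint

section Frame

variable {F : ℕ → H →L[ℂ] H₀}

lemma IsParsevalFamily.seqSum_adjoint_apply_apply (hF : IsParsevalFamily F) (x : H) :
    SeqSum (fun n => adjoint (F n) (F n x)) x := by
  have h := (seqSum_Lop (parsevalAnalysis F hF x)).map (adjoint (parsevalAnalysis F hF))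
  rw [← comp_apply (adjoint _), adjoint_parsevalAnalysis_comp_self, one_apply_eq_self] at h
  convert h using 2 with n
  rw [← adjoint_parsevalAnalysis_comp_Lop hF n]
  rfl

lemma IsParsevalFamily.seqSum_frame_apply (hF : IsParsevalFamily F) {A Ψ : ℕ → H →L[ℂ] H₀}
    {U V : H →L[ℂ] H} (hA : ∀ n, A n = F n ∘L U) (hΨ : ∀ n, Ψ n = F n ∘L V) (h : H) :
    SeqSum (fun n => adjoint (Ψ n) (A n h)) ((adjoint V ∘L U) h) := by
  simpa [hA, hΨ, adjoint_comp] using (hF.seqSum_adjoint_apply_apply (U h)).map (adjoint V)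

lemma IsParsevalFamily.eq_comp_of_seqSum_Lop (hF : IsParsevalFamily F)
    (hFortho : ∀ n k, F n ∘L adjoint (F k) = if n = k then 1 else 0) {B : ℕ → H →L[ℂ] H₀}
    {θ : H →L[ℂ] l2 ℕ H₀} (hθ : ∀ h, SeqSum (fun n => Lop n (B n h)) (θ h)) (n : ℕ) :
    B n = F n ∘L (adjoint (parsevalAnalysis F hF) ∘L θ) := by
  ext h
  rw [← comp_assoc, comp_adjoint_parsevalAnalysis hF hFortho, comp_apply, adjoint_Lop_apply,
    (hθ h).apply_eq_of_Lop n]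

end Frame

/-- Given an orthonormal basis `(Fₙ)` in `B(H,H₀)`, `((Aₙ),(Ψₙ))` is a
factorable weak OVF iff `Aₙ = Fₙ U`, `Ψₙ = Fₙ V` for bounded `U, V : H → H` with `V*U`
bounded invertible. -/
theorem stmt9 (F : ℕ → H →L[ℂ] H₀)
    (hFortho : ∀ n k : ℕ,
      F n ∘L adjoint (F k) = if n = k then (1 : H₀ →L[ℂ] H₀) else 0)
    (hFcomplete : ∀ h : H, HasSum (fun n => ‖F n h‖ ^ 2) (‖h‖ ^ 2))
    (A Ψ : ℕ → H →L[ℂ] H₀) :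
    (∃ (θA θΨ : H →L[ℂ] l2 ℕ H₀) (S : H →L[ℂ] H),
        (∀ h : H, SeqSum (fun n => Lop n (A n h)) (θA h)) ∧
        (∀ h : H, SeqSum (fun n => Lop n (Ψ n h)) (θΨ h)) ∧
        (∀ h : H, SeqSum (fun n => adjoint (Ψ n) (A n h)) (S h)) ∧
        IsUnit S) ↔
    (∃ U V : H →L[ℂ] H,
        (∀ n : ℕ, A n = F n ∘L U) ∧
        (∀ n : ℕ, Ψ n = F n ∘L V) ∧
        IsUnit (adjoint V ∘L U)) := by
  have hF : IsParsevalFamily F := hFcomplete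
  constructor
  · rintro ⟨θA, θΨ, S, hθA, hθΨ, hS, hSunit⟩
    have hA := hF.eq_comp_of_seqSum_Lop hFortho hθA
    have hΨ := hF.eq_comp_of_seqSum_Lop hFortho hθΨ
    refine ⟨_, _, hA, hΨ, ?_⟩
    convert hSunit using 1
    ext h
    exact tendsto_nhds_unique (hF.seqSum_frame_apply hA hΨ h) (hS h)
  · rintro ⟨U, V, hA, hΨ, hUnit⟩
    exact ⟨_, _, _, hF.seqSum_Lop_of_eq_comp hA, hF.seqSum_Lop_of_eq_comp hΨ,
      hF.seqSum_frame_apply hA hΨ, hUnit⟩
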